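/- arXiv:1010.2427 — 4 statements merged into one kernel-verified Lean document; each statement's English description precedes it below -/
import Mathlib

section
/- Let ρ, σ, μ, ν ≥ 0 with s := ρμ + σν > 0. Suppose π, ψ are smooth solutions of ∂ψ/∂t = ∂π/∂r, ∂π/∂t = ∂ψ/∂r + (p/r)ψ on (0,R] with ψ(0,t)=0, satisfying the boundary condition ρπ + σψ + μ(∂ψ/∂t) + ν(∂π/∂t) = 0 at r = R. Define E_b(t) = (1/2)∫₀^R (π²+ψ²) r^p dr + (R^p/(2s))(μψ(R,t) + νπ(R,t))². Then dE_b/dt = -(R^p/s)(μσ ψ(R,t)² + νρ π(R,t)²) ≤ 0. -/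
/-!
Differentiating the boundary term and using the boundary condition
`μ ψ' + ν π' = -(ρ π + σ ψ)` gives `-(R^p/s) (μ ψ + ν π)(ρ π + σ ψ)`. Since `ρ μ + σ ν = s`,
its cross term is exactly `-R^p π ψ`, which cancels the boundary flux `dE/dt = R^p π ψ` and
leaves `-(R^p/s)(μ σ ψ² + ν ρ π²)`.
-/

theorem hasDerivAt_add_boundaryEnergy {E x y : ℝ → ℝ} {c ρ σ μ ν x' y' t : ℝ}
    (hs : ρ * μ + σ * ν ≠ 0) (hE : HasDerivAt E (c * (x t * y t)) t)
    (hx : HasDerivAt x x' t) (hy : HasDerivAt y y' t)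
    (hbc : ρ * x t + σ * y t + μ * y' + ν * x' = 0) :
    HasDerivAt (fun τ => E τ + c / (2 * (ρ * μ + σ * ν)) * (μ * y τ + ν * x τ) ^ 2)
      (-(c / (ρ * μ + σ * ν)) * (μ * σ * y t ^ 2 + ν * ρ * x t ^ 2)) t := by
  have hbdry : HasDerivAt (fun τ => μ * y τ + ν * x τ) (-(ρ * x t + σ * y t)) t := by
    exact ((hy.const_mul μ).add (hx.const_mul ν)).congr_deriv (by linarith)
  refine (hE.add ((hbdry.pow 2).const_mul _)).congr_deriv ?_
  field_simp
  ring

theorem neg_div_mul_boundaryDissipation_nonpos {c ρ σ μ ν a b : ℝ} (hc : 0 ≤ c)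
    (hρ : 0 ≤ ρ) (hσ : 0 ≤ σ) (hμ : 0 ≤ μ) (hν : 0 ≤ ν) :
    -(c / (ρ * μ + σ * ν)) * (μ * σ * a ^ 2 + ν * ρ * b ^ 2) ≤ 0 := by
  rw [neg_mul, neg_nonpos]
  positivity

theorem stmt_4_general (p R : ℝ) (hR : 0 < R)
    (ρ σ μ ν : ℝ) (hρ : 0 ≤ ρ) (hσ : 0 ≤ σ) (hμ : 0 ≤ μ) (hν : 0 ≤ ν)
    (hs : 0 < ρ * μ + σ * ν)
    (pi psi : ℝ → ℝ → ℝ) (E : ℝ → ℝ)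
    -- the energy identity dE/dt = R^p π(R,t) ψ(R,t) may be assumed:
    (hE : ∀ t : ℝ, HasDerivAt E (R ^ p * (pi R t * psi R t)) t)
    (hP : ∀ t : ℝ, DifferentiableAt ℝ (fun τ => pi R τ) t)
    (hS : ∀ t : ℝ, DifferentiableAt ℝ (fun τ => psi R τ) t)
    -- boundary condition ρπ + σψ + μ ∂ψ/∂t + ν ∂π/∂t = 0 at r = R:
    (hbc : ∀ t : ℝ, ρ * pi R t + σ * psi R t
        + μ * deriv (fun τ => psi R τ) t + ν * deriv (fun τ => pi R τ) t = 0)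
    (t : ℝ) :
    HasDerivAt
      (fun τ => E τ + R ^ p / (2 * (ρ * μ + σ * ν)) * (μ * psi R τ + ν * pi R τ) ^ 2)
      (-(R ^ p / (ρ * μ + σ * ν)) * (μ * σ * (psi R t) ^ 2 + ν * ρ * (pi R t) ^ 2)) t
    ∧ -(R ^ p / (ρ * μ + σ * ν)) * (μ * σ * (psi R t) ^ 2 + ν * ρ * (pi R t) ^ 2) ≤ 0 :=
  ⟨hasDerivAt_add_boundaryEnergy hs.ne' (hE t) (hP t).hasDerivAt (hS t).hasDerivAt (hbc t),
    neg_div_mul_boundaryDissipation_nonpos (Real.rpow_nonneg hR.le p) hρ hσ hμ hν⟩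

theorem stmt_4 (p R : ℝ) (hp : 0 < p) (hR : 0 < R)
    (ρ σ μ ν : ℝ) (hρ : 0 ≤ ρ) (hσ : 0 ≤ σ) (hμ : 0 ≤ μ) (hν : 0 ≤ ν)
    (hs : 0 < ρ * μ + σ * ν)
    (pi psi : ℝ → ℝ → ℝ) (E : ℝ → ℝ)
    -- the energy identity dE/dt = R^p π(R,t) ψ(R,t) may be assumed:
    (hE : ∀ t : ℝ, HasDerivAt E (R ^ p * (pi R t * psi R t)) t)
    (hP : ∀ t : ℝ, DifferentiableAt ℝ (fun τ => pi R τ) t)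
    (hS : ∀ t : ℝ, DifferentiableAt ℝ (fun τ => psi R τ) t)
    -- boundary condition ρπ + σψ + μ ∂ψ/∂t + ν ∂π/∂t = 0 at r = R:
    (hbc : ∀ t : ℝ, ρ * pi R t + σ * psi R t
        + μ * deriv (fun τ => psi R τ) t + ν * deriv (fun τ => pi R τ) t = 0)
    (t : ℝ) :
    HasDerivAt
      (fun τ => E τ + R ^ p / (2 * (ρ * μ + σ * ν)) * (μ * psi R τ + ν * pi R τ) ^ 2)
      (-(R ^ p / (ρ * μ + σ * ν)) * (μ * σ * (psi R t) ^ 2 + ν * ρ * (pi R t) ^ 2)) t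
    ∧ -(R ^ p / (ρ * μ + σ * ν)) * (μ * σ * (psi R t) ^ 2 + ν * ρ * (pi R t) ^ 2) ≤ 0 :=
  stmt_4_general p R hR ρ σ μ ν hρ hσ hμ hν hs pi psi E hE hP hS hbc t
end

section
/- Let W, W̃ be symmetric positive definite real N×N matrices, D, D̃ real N×N matrices, and B a real N×N matrix satisfying the summation-by-parts relation W D̃ + (W̃ D)^t = B. If Π(t), Ψ(t) ∈ ℝ^N solve the ODE system Ψ' = h^{-1} D Π, Π' = h^{-1} D̃ Ψ (h > 0 a constant), then the discrete energy Ê(t) = (1/2) h^{p+1} (Π^t W Π + Ψ^t W̃ Ψ) satisfies dÊ/dt = h^p Π(t)^t B Ψ(t). -/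
/-! Differentiating the quadratic forms and using the symmetry of `W`, `W̃` gives
`dÊ/dt = h^{p+1} (Πᵀ W Π' + Ψᵀ W̃ Ψ')`; substituting the ODE turns this into
`h^p (Πᵀ W D̃ Ψ + Ψᵀ W̃ D Π) = h^p Πᵀ (W D̃ + (W̃ D)ᵀ) Ψ = h^p Πᵀ B Ψ`. -/

open Matrix

section

variable {𝕜 m n : Type*} [NontriviallyNormedField 𝕜] [Fintype n]
  {f g : 𝕜 → n → 𝕜} {f' g' : n → 𝕜} {t : 𝕜}

theorem HasDerivAt.dotProduct (hf : HasDerivAt f f' t) (hg : HasDerivAt g g' t) :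
    HasDerivAt (fun τ => f τ ⬝ᵥ g τ) (f' ⬝ᵥ g t + f t ⬝ᵥ g') t := by
  have hfi := hasDerivAt_pi.mp hf
  have hgi := hasDerivAt_pi.mp hg
  have := HasDerivAt.fun_sum (u := Finset.univ) fun i _ => (hfi i).fun_mul (hgi i)
  rwa [Finset.sum_add_distrib] at this

theorem HasDerivAt.mulVec (M : Matrix m n 𝕜) (hg : HasDerivAt g g' t) :
    HasDerivAt (fun τ => M *ᵥ g τ) (M *ᵥ g') t :=
  hasDerivAt_pi.mpr fun i => (HasDerivAt.dotProduct (hasDerivAt_const t (M i)) hg).congr_deriv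
    (by rw [zero_dotProduct, zero_add]; rfl)

theorem HasDerivAt.dotProduct_mulVec_self {M : Matrix n n 𝕜} (hM : M.IsSymm)
    (hf : HasDerivAt f f' t) :
    HasDerivAt (fun τ => f τ ⬝ᵥ M *ᵥ f τ) (2 * (f t ⬝ᵥ M *ᵥ f')) t := by
  convert hf.dotProduct (hf.mulVec M) using 1
  rw [← hM.eq, dotProduct_transpose_mulVec, hM.eq]
  ring

theorem hasDerivAt_energy_of_sbp {W Wt D Dt B : Matrix n n 𝕜} (hW : W.IsSymm) (hWt : Wt.IsSymm)
    (hSBP : W * Dt + (Wt * D)ᵀ = B) {Pi Psi : 𝕜 → n → 𝕜} {c : 𝕜}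
    (hPi : HasDerivAt Pi (c • Dt *ᵥ Psi t) t) (hPsi : HasDerivAt Psi (c • D *ᵥ Pi t) t) :
    HasDerivAt (fun τ => Pi τ ⬝ᵥ W *ᵥ Pi τ + Psi τ ⬝ᵥ Wt *ᵥ Psi τ)
      (2 * c * (Pi t ⬝ᵥ B *ᵥ Psi t)) t := by
  refine ((hPi.dotProduct_mulVec_self hW).add (hPsi.dotProduct_mulVec_self hWt)).congr_deriv ?_
  rw [← hSBP, add_mulVec, dotProduct_add, dotProduct_transpose_mulVec, ← mulVec_mulVec,
    ← mulVec_mulVec, mulVec_smul, mulVec_smul, dotProduct_smul, dotProduct_smul, smul_eq_mul,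
    smul_eq_mul]
  ring

end

theorem stmt_5_general (N : ℕ) (h p : ℝ) (hh : 0 < h)
    (W Wt D Dt B : Matrix (Fin N) (Fin N) ℝ)
    (hWsym : W.IsSymm) (hWtsym : Wt.IsSymm)
    -- the summation-by-parts relation W D̃ + (W̃ D)ᵗ = B:
    (hSBP : W * Dt + (Wt * D)ᵀ = B)
    (Pi Psi : ℝ → Fin N → ℝ)
    (hode1 : ∀ t : ℝ, HasDerivAt Psi (h⁻¹ • D.mulVec (Pi t)) t)
    (hode2 : ∀ t : ℝ, HasDerivAt Pi (h⁻¹ • Dt.mulVec (Psi t)) t)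
    (t : ℝ) :
    HasDerivAt
      (fun τ => (1/2) * h ^ (p + 1) *
        (Pi τ ⬝ᵥ W.mulVec (Pi τ) + Psi τ ⬝ᵥ Wt.mulVec (Psi τ)))
      (h ^ p * (Pi t ⬝ᵥ B.mulVec (Psi t))) t := by
  refine ((hasDerivAt_energy_of_sbp hWsym hWtsym hSBP (hode2 t) (hode1 t)).const_mul
    ((1/2) * h ^ (p + 1))).congr_deriv ?_
  rw [Real.rpow_add_one hh.ne']
  field_simp

theorem stmt_5 (N : ℕ) (h p : ℝ) (hh : 0 < h)
    (W Wt D Dt B : Matrix (Fin N) (Fin N) ℝ)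
    (hWsym : W.IsSymm) (hWtsym : Wt.IsSymm) (hWpd : W.PosDef) (hWtpd : Wt.PosDef)
    -- the summation-by-parts relation W D̃ + (W̃ D)ᵗ = B:
    (hSBP : W * Dt + (Wt * D)ᵀ = B)
    (Pi Psi : ℝ → Fin N → ℝ)
    (hode1 : ∀ t : ℝ, HasDerivAt Psi (h⁻¹ • D.mulVec (Pi t)) t)
    (hode2 : ∀ t : ℝ, HasDerivAt Pi (h⁻¹ • Dt.mulVec (Psi t)) t)
    (t : ℝ) :
    HasDerivAt
      (fun τ => (1/2) * h ^ (p + 1) *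
        (Pi τ ⬝ᵥ W.mulVec (Pi τ) + Psi τ ⬝ᵥ Wt.mulVec (Psi τ)))
      (h ^ p * (Pi t ⬝ᵥ B.mulVec (Psi t))) t :=
  stmt_5_general N h p hh W Wt D Dt B hWsym hWtsym hSBP Pi Psi hode1 hode2 t
end

section
/- Fix h > 0 and p ∈ ℕ, and let ψ : ℝ → ℝ be smooth. Define the Evans difference operator at a point r > 0 by (D̃ψ)(r) = (p+1) · ((r+h)^p ψ(r+h) - (r-h)^p ψ(r-h)) / ((r+h)^{p+1} - (r-h)^{p+1}). Then as h → 0 at fixed r > 0, (D̃ψ)(r) = ψ'(r) + (p/r)ψ(r) + O(h²). -/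
/-!
With `g x = x ^ p * ψ x` we have `g' r = r ^ p * (ψ' r + p / r * ψ r)` and `(x ^ (p + 1))' r =
(p + 1) * r ^ p`, so the operator is the quotient of the central differences of `(p + 1) * g` and
of `x ^ (p + 1)`, whose leading terms `2 h` times these derivatives have exactly the claimed ratio.
A central difference `G (x + h) - G (x - h) - 2 h G' x` is odd in `h` with vanishing derivative at
`0`, so Taylor's theorem to second order bounds it by `C h³`; since the denominator is at least
`2 h r ^ p`, the quotient is off by `O(h²)`.
-/

open Set

namespace Function

variable {𝕜 F : Type*} [NontriviallyNormedField 𝕜] [NormedAddCommGroup F] [NormedSpace 𝕜 F]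
  {f : 𝕜 → F}

theorem Odd.even_deriv (hf : f.Odd) : (_root_.deriv f).Even := fun x => by
  have h := congrArg (fun g : 𝕜 → F => _root_.deriv g x) (funext hf)
  simp only [deriv_comp_neg, deriv.fun_neg] at h
  exact neg_inj.mp h

theorem Even.odd_deriv (hf : f.Even) : (_root_.deriv f).Odd := fun x => by
  have h := congrArg (fun g : 𝕜 → F => _root_.deriv g x) (funext hf)
  simp only [deriv_comp_neg] at h
  exact neg_eq_iff_eq_neg.mp h

end Function

theorem exists_norm_le_mul_pow_of_iteratedDeriv_eq_zero {E : Type*} [NormedAddCommGroup E]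
    [NormedSpace ℝ E] {f : ℝ → E} {a b : ℝ} {n : ℕ} (hab : a < b) (hf : ContDiff ℝ (n + 1) f)
    (hzero : ∀ k ≤ n, iteratedDeriv k f a = 0) :
    ∃ C, ∀ x ∈ Icc a b, ‖f x‖ ≤ C * (x - a) ^ (n + 1) := by
  obtain ⟨C, hC⟩ := exists_taylor_mean_remainder_bound hab.le hf.contDiffOn
  have htaylor (x : ℝ) : taylorWithinEval f n (Icc a b) a x = 0 := by
    rw [taylor_within_apply]
    refine Finset.sum_eq_zero fun k hk => ?_
    rw [iteratedDerivWithin_eq_iteratedDeriv (uniqueDiffOn_Icc hab)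
      (hf.of_le (by exact_mod_cast (Finset.mem_range_succ_iff.mp hk).trans n.le_succ)).contDiffAt
      (left_mem_Icc.mpr hab.le), hzero k (Finset.mem_range_succ_iff.mp hk), smul_zero]
  exact ⟨C, fun x hx => by simpa [htaylor] using hC x hx⟩

theorem Function.Odd.exists_abs_le_mul_pow_three {f : ℝ → ℝ} (hf : f.Odd) (hf3 : ContDiff ℝ 3 f)
    (hf' : deriv f 0 = 0) {b : ℝ} (hb : 0 < b) : ∃ C, ∀ x ∈ Icc 0 b, |f x| ≤ C * x ^ 3 := by
  have hzero : ∀ k ≤ 2, iteratedDeriv k f 0 = 0 := by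
    intro k hk
    interval_cases k
    · simpa using hf.map_zero
    · simpa using hf'
    · simpa [iteratedDeriv_succ] using hf.even_deriv.odd_deriv.map_zero
  simpa using exists_norm_le_mul_pow_of_iteratedDeriv_eq_zero hb hf3 hzero

theorem exists_abs_centralDifference_le {G : ℝ → ℝ} (hG : ContDiff ℝ 3 G) (x : ℝ) {b : ℝ}
    (hb : 0 < b) :
    ∃ C, ∀ h ∈ Icc 0 b, |G (x + h) - G (x - h) - 2 * h * deriv G x| ≤ C * h ^ 3 := by
  set K : ℝ → ℝ := fun h => G (x + h) - G (x - h) - 2 * h * deriv G x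
  have hodd : Function.Odd K := fun h => by simp only [K, ← sub_eq_add_neg, sub_neg_eq_add]; ring
  have hK : ContDiff ℝ 3 K := by fun_prop
  have hK' : HasDerivAt K (deriv G x - -deriv G x - 2 * 1 * deriv G x) 0 := by
    refine ((HasDerivAt.comp_const_add x 0 ?_).fun_sub (HasDerivAt.comp_const_sub x 0 ?_)).fun_sub
      (((hasDerivAt_id' (0 : ℝ)).const_mul 2).mul_const _) <;>
      simpa using (hG.differentiable (by norm_num) x).hasDerivAt
  exact Function.Odd.exists_abs_le_mul_pow_three hodd hK (by rw [hK'.deriv]; ring) hb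

theorem pow_mul_sub_le_pow_succ_sub_pow_succ {R : Type*} [CommRing R] [LinearOrder R]
    [IsStrictOrderedRing R] {a b : R} (hb : 0 ≤ b) (hba : b ≤ a) (n : ℕ) :
    a ^ n * (a - b) ≤ a ^ (n + 1) - b ^ (n + 1) := by
  have : b ^ n ≤ a ^ n := pow_le_pow_left₀ hb hba n
  nlinarith [pow_succ a n, pow_succ b n]

theorem pow_mul_two_mul_le_add_pow_succ_sub_sub_pow_succ {r h : ℝ} (hh : 0 ≤ h) (hhr : h ≤ r)
    (n : ℕ) : r ^ n * (2 * h) ≤ (r + h) ^ (n + 1) - (r - h) ^ (n + 1) := calc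
  r ^ n * (2 * h) ≤ (r + h) ^ n * (2 * h) := by gcongr <;> linarith
  _ = (r + h) ^ n * ((r + h) - (r - h)) := by ring
  _ ≤ _ := pow_mul_sub_le_pow_succ_sub_pow_succ (by linarith) (by linarith) n

theorem hasDerivAt_pow_mul {ψ : ℝ → ℝ} {r : ℝ} (hr : r ≠ 0) (hψ : DifferentiableAt ℝ ψ r)
    (p : ℕ) : HasDerivAt (fun x => x ^ p * ψ x) (r ^ p * (deriv ψ r + p / r * ψ r)) r := by
  refine ((hasDerivAt_pow p r).fun_mul hψ.hasDerivAt).congr_deriv ?_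
  rcases p with _ | p
  · simp
  · rw [Nat.add_sub_cancel]
    field_simp
    ring

theorem exists_abs_evansNumerator_sub_le (p : ℕ) {r : ℝ} (hr : 0 < r) {ψ : ℝ → ℝ}
    (hψ : ContDiff ℝ 3 ψ) :
    ∃ M, ∀ h ∈ Icc 0 r,
      |((p : ℝ) + 1) * ((r + h) ^ p * ψ (r + h) - (r - h) ^ p * ψ (r - h))
        - (deriv ψ r + p / r * ψ r) * ((r + h) ^ (p + 1) - (r - h) ^ (p + 1))| ≤ M * h ^ 3 := by
  set L := deriv ψ r + p / r * ψ r
  obtain ⟨C₁, hC₁⟩ := exists_abs_centralDifference_le (G := fun x => x ^ p * ψ x) (by fun_prop) r hr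
  obtain ⟨C₂, hC₂⟩ := exists_abs_centralDifference_le (G := fun x => x ^ (p + 1)) (by fun_prop) r hr
  rw [(hasDerivAt_pow_mul hr.ne' (hψ.differentiable (by norm_num) r) p).deriv] at hC₁
  rw [deriv_pow_field, Nat.add_sub_cancel] at hC₂
  refine ⟨((p : ℝ) + 1) * C₁ + |L| * C₂, fun h hh => ?_⟩
  calc _ = |((p : ℝ) + 1) * ((r + h) ^ p * ψ (r + h) - (r - h) ^ p * ψ (r - h)
              - 2 * h * (r ^ p * L))
          - L * ((r + h) ^ (p + 1) - (r - h) ^ (p + 1) - 2 * h * ((p + 1 : ℕ) * r ^ p))| := by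
        congr 1; push_cast; ring
    _ ≤ ((p : ℝ) + 1) * (C₁ * h ^ 3) + |L| * (C₂ * h ^ 3) := by
      refine (abs_sub _ _).trans (add_le_add ?_ ?_) <;> rw [abs_mul]
      · rw [abs_of_pos (by positivity)]; gcongr; exact hC₁ h hh
      · gcongr; exact hC₂ h hh
    _ = (((p : ℝ) + 1) * C₁ + |L| * C₂) * h ^ 3 := by ring

theorem stmt_8 (p : ℕ) (r : ℝ) (hr : 0 < r) (ψ : ℝ → ℝ) (hψ : ContDiff ℝ 3 ψ) :
    ∃ C h₀ : ℝ, 0 < C ∧ 0 < h₀ ∧ ∀ h : ℝ, 0 < h → h < h₀ →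
      |((p : ℝ) + 1) * ((r + h) ^ p * ψ (r + h) - (r - h) ^ p * ψ (r - h)) /
          ((r + h) ^ (p + 1) - (r - h) ^ (p + 1))
        - (deriv ψ r + ((p : ℝ) / r) * ψ r)| ≤ C * h ^ 2 := by
  obtain ⟨M, hM⟩ := exists_abs_evansNumerator_sub_le p hr hψ
  refine ⟨max (M / (2 * r ^ p)) 1, r, lt_max_of_lt_right one_pos, hr, fun h hh hhr => ?_⟩
  have hnum := hM h ⟨hh.le, hhr.le⟩
  set E := (r + h) ^ (p + 1) - (r - h) ^ (p + 1)
  have hE : r ^ p * (2 * h) ≤ E := pow_mul_two_mul_le_add_pow_succ_sub_sub_pow_succ hh.le hhr.le p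
  have hEpos : 0 < E := lt_of_lt_of_le (by positivity) hE
  calc _ = |((p : ℝ) + 1) * ((r + h) ^ p * ψ (r + h) - (r - h) ^ p * ψ (r - h))
          - (deriv ψ r + p / r * ψ r) * E| / E := by
        rw [div_sub' hEpos.ne', abs_div, abs_of_pos hEpos, mul_comm E]
    _ ≤ M * h ^ 3 / (r ^ p * (2 * h)) :=
        div_le_div₀ ((abs_nonneg _).trans hnum) hnum (by positivity) hE
    _ = M / (2 * r ^ p) * h ^ 2 := by field_simp
    _ ≤ max (M / (2 * r ^ p)) 1 * h ^ 2 := by gcongr; exact le_max_left _ _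
end

section
/- Let p ∈ ℕ be even. Then there is a polynomial q ∈ ℚ[x] of degree at most p/2 with q(0) = 1 such that the sequence w_i = i^p · q(1/i²) (for i ≥ 1) satisfies the recurrence (i+1)w_{i+1} - (i-1)w_{i-1} = 2(p+1)w_i for all i ≥ 2. (I.e., the asymptotically constant solution mode w̄_i^{(+)} of the SBP2 recurrence is a finite polynomial in i^{-2} for even p.) -/
/-!
Write `p = 2K` and `f(x) = x^(2K+1) q(x⁻²)`, an odd polynomial of degree `2K+1`; the recurrence
becomes the eigenvalue equation `x (f(x+1) - f(x-1)) = 2(2K+1) f(x)`. The operator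
`L f = x (f(x+1) - f(x-1))` is triangular on the basis `φ_m(x) = (x+m)(x+m-1)⋯(x-m)`:
`L φ_m = 2(2m+1) (φ_m + m² φ_{m-1})`. Its eigenvalues `2(2m+1)` are distinct, so the top one has
an eigenvector `∑ d_s φ_{K-s}` with `d_0 = 1`; the recursion for the `d_s` makes
`L f - 2(2K+1) f` telescope. Since `φ_m(x) = x^(2m+1) ρ_m(x⁻²)` with `ρ_m(y) = ∏_{j ≤ m} (1 - j² y)`,
the eigenvector is `x^(2K+1) q(x⁻²)` for `q(y) = ∑ d_s y^s ρ_{K-s}(y)`.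
-/

open Polynomial Finset

section CenteredFactorial

variable {R : Type*} [CommRing R]

def centeredFactorial : ℕ → R → R
  | 0, x => x
  | m + 1, x => (x ^ 2 - ((m : R) + 1) ^ 2) * centeredFactorial m x

theorem centeredFactorial_succ_add_one (m : ℕ) (x : R) :
    centeredFactorial (m + 1) (x + 1) = (x + m + 2) * (x + m + 1) * centeredFactorial m x := by
  induction m with
  | zero => simp only [centeredFactorial]; push_cast; ring
  | succ m ih =>
    rw [centeredFactorial, ih, centeredFactorial]
    push_cast
    ring

theorem centeredFactorial_succ_sub_one (m : ℕ) (x : R) :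
    centeredFactorial (m + 1) (x - 1) = (x - m - 2) * (x - m - 1) * centeredFactorial m x := by
  induction m with
  | zero => simp only [centeredFactorial]; push_cast; ring
  | succ m ih =>
    rw [centeredFactorial, ih, centeredFactorial]
    push_cast
    ring

/-- For `m = 0` the junk term `centeredFactorial (0 - 1)` is killed by the factor `m ^ 2`. -/
theorem mul_centeredFactorial_add_one_sub (m : ℕ) (x : R) :
    x * (centeredFactorial m (x + 1) - centeredFactorial m (x - 1)) =
      2 * (2 * m + 1) * (centeredFactorial m x + m ^ 2 * centeredFactorial (m - 1) x) := by
  cases m with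
  | zero => simp only [centeredFactorial]; push_cast; ring
  | succ m =>
    rw [centeredFactorial_succ_add_one, centeredFactorial_succ_sub_one, Nat.add_sub_cancel,
      centeredFactorial]
    push_cast
    ring

noncomputable def centeredFactorialRev : ℕ → R[X]
  | 0 => 1
  | m + 1 => (1 - C (((m : R) + 1) ^ 2) * X) * centeredFactorialRev m

theorem natDegree_centeredFactorialRev_le (m : ℕ) :
    (centeredFactorialRev m : R[X]).natDegree ≤ m := by
  induction m with
  | zero => simp [centeredFactorialRev]
  | succ m ih =>
    have hlin : (1 - C (((m : R) + 1) ^ 2) * X).natDegree ≤ 1 := by compute_degree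
    exact natDegree_mul_le.trans (by omega)

theorem centeredFactorialRev_eval_zero (m : ℕ) : (centeredFactorialRev m : R[X]).eval 0 = 1 := by
  induction m with
  | zero => simp [centeredFactorialRev]
  | succ m ih => simp [centeredFactorialRev, ih]

end CenteredFactorial

section Field

variable {𝕜 : Type*} [Field 𝕜]

theorem pow_mul_centeredFactorialRev_eval (m : ℕ) {x : 𝕜} (hx : x ≠ 0) :
    x ^ (2 * m + 1) * (centeredFactorialRev m).eval (1 / x ^ 2) = centeredFactorial m x := by
  induction m with
  | zero => simp [centeredFactorialRev, centeredFactorial]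
  | succ m ih =>
    rw [centeredFactorial, ← ih]
    simp only [centeredFactorialRev, eval_mul, eval_sub, eval_one, eval_C, eval_X]
    field_simp
    ring

def modeCoeff (K : ℕ) : ℕ → 𝕜
  | 0 => 1
  | s + 1 =>
    modeCoeff K s * (2 * ((K - s : ℕ) : 𝕜) + 1) * ((K - s : ℕ) : 𝕜) ^ 2 / (2 * ((s : 𝕜) + 1))

theorem two_mul_mul_modeCoeff_succ [CharZero 𝕜] (K s : ℕ) :
    2 * ((s : 𝕜) + 1) * modeCoeff K (s + 1) =
      modeCoeff K s * (2 * ((K - s : ℕ) : 𝕜) + 1) * ((K - s : ℕ) : 𝕜) ^ 2 :=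
  mul_div_cancel₀ _ (mul_ne_zero two_ne_zero (Nat.cast_add_one_ne_zero s))

theorem modeCoeff_succ_self (K : ℕ) : (modeCoeff K (K + 1) : 𝕜) = 0 := by
  simp [modeCoeff]

def modeSum (K : ℕ) (x : 𝕜) : 𝕜 :=
  ∑ s ∈ range (K + 1), modeCoeff K s * centeredFactorial (K - s) x

theorem mul_modeSum_add_one_sub [CharZero 𝕜] (K : ℕ) (x : 𝕜) :
    x * (modeSum K (x + 1) - modeSum K (x - 1)) = 2 * (2 * K + 1) * modeSum K x := by
  set g : ℕ → 𝕜 := fun s => 4 * s * modeCoeff K s * centeredFactorial (K - s) x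
  have hstep : ∀ s ∈ range (K + 1),
      x * (modeCoeff K s * centeredFactorial (K - s) (x + 1)
          - modeCoeff K s * centeredFactorial (K - s) (x - 1))
        - 2 * (2 * K + 1) * (modeCoeff K s * centeredFactorial (K - s) x) = g (s + 1) - g s := by
    intro s hs
    obtain ⟨m, rfl⟩ : ∃ m, K = s + m := ⟨K - s, by have := mem_range.mp hs; omega⟩
    have hcoeff := two_mul_mul_modeCoeff_succ (𝕜 := 𝕜) (s + m) s
    have hL := mul_centeredFactorial_add_one_sub m x
    simp only [g, Nat.add_sub_cancel_left, Nat.sub_add_eq] at hcoeff ⊢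
    push_cast at hcoeff ⊢
    linear_combination modeCoeff (s + m) s * hL - 2 * centeredFactorial (m - 1) x * hcoeff
  have htelescope :
      x * (modeSum K (x + 1) - modeSum K (x - 1)) - 2 * (2 * K + 1) * modeSum K x =
        g (K + 1) - g 0 := by
    rw [← sum_range_sub, ← sum_congr rfl hstep]
    simp only [modeSum, mul_sum, ← sum_sub_distrib]
  have hends : g (K + 1) - g 0 = 0 := by simp [g, modeCoeff_succ_self]
  exact sub_eq_zero.mp (htelescope.trans hends)

noncomputable def modePoly (K : ℕ) : 𝕜[X] :=
  ∑ s ∈ range (K + 1), C (modeCoeff K s) * X ^ s * centeredFactorialRev (K - s)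

theorem natDegree_modePoly_le (K : ℕ) : (modePoly K : 𝕜[X]).natDegree ≤ K := by
  refine natDegree_sum_le_of_forall_le _ _ fun s hs => ?_
  have hsK := mem_range.mp hs
  have hmonomial := natDegree_C_mul_X_pow_le (modeCoeff K s : 𝕜) s
  have hrev := natDegree_centeredFactorialRev_le (R := 𝕜) (K - s)
  exact natDegree_mul_le.trans (by omega)

theorem modePoly_eval_zero (K : ℕ) : (modePoly K : 𝕜[X]).eval 0 = 1 := by
  simp [modePoly, eval_finsetSum, sum_range_succ', centeredFactorialRev_eval_zero, modeCoeff]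

theorem mul_pow_mul_modePoly_eval (K : ℕ) {x : 𝕜} (hx : x ≠ 0) :
    x * (x ^ (2 * K) * (modePoly K).eval (1 / x ^ 2)) = modeSum K x := by
  simp only [modePoly, modeSum, eval_finsetSum, eval_mul, eval_pow, eval_C, eval_X, mul_sum]
  refine sum_congr rfl fun s hs => ?_
  have hsK := mem_range.mp hs
  rw [← pow_mul_centeredFactorialRev_eval (K - s) hx]
  have hpow : x * x ^ (2 * K) * (1 / x ^ 2) ^ s = x ^ (2 * (K - s) + 1) := by
    rw [div_pow, one_pow, mul_one_div, div_eq_iff (pow_ne_zero _ (pow_ne_zero _ hx)), ← pow_mul,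
      ← pow_succ', ← pow_add]
    congr 1
    omega
  rw [← hpow]
  ring

theorem modePoly_recurrence [CharZero 𝕜] (K : ℕ) {x : 𝕜} (hx : x ≠ 0) (hx₁ : x + 1 ≠ 0)
    (hx₂ : x - 1 ≠ 0) :
    (x + 1) * ((x + 1) ^ (2 * K) * (modePoly K).eval (1 / (x + 1) ^ 2))
      - (x - 1) * ((x - 1) ^ (2 * K) * (modePoly K).eval (1 / (x - 1) ^ 2))
      = 2 * (2 * K + 1) * (x ^ (2 * K) * (modePoly K).eval (1 / x ^ 2)) := by
  apply mul_left_cancel₀ hx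
  rw [mul_pow_mul_modePoly_eval K hx₁, mul_pow_mul_modePoly_eval K hx₂, mul_left_comm,
    mul_pow_mul_modePoly_eval K hx]
  exact mul_modeSum_add_one_sub K x

end Field

theorem stmt_14 (p : ℕ) (hp : Even p) :
    ∃ q : Polynomial ℚ, q.natDegree ≤ p / 2 ∧ q.eval 0 = 1 ∧
      ∀ i : ℕ, 2 ≤ i →
        ((i : ℚ) + 1) * (((i : ℚ) + 1) ^ p * q.eval (1 / ((i : ℚ) + 1) ^ 2))
          - ((i : ℚ) - 1) * (((i : ℚ) - 1) ^ p * q.eval (1 / ((i : ℚ) - 1) ^ 2))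
          = 2 * ((p : ℚ) + 1) * ((i : ℚ) ^ p * q.eval (1 / (i : ℚ) ^ 2)) := by
  obtain ⟨K, rfl⟩ := hp
  refine ⟨modePoly K, (natDegree_modePoly_le K).trans (by omega), modePoly_eval_zero K,
    fun i hi => ?_⟩
  have hi' : (2 : ℚ) ≤ i := by exact_mod_cast hi
  rw [← two_mul, Nat.cast_mul, Nat.cast_two]
  exact modePoly_recurrence K (by linarith) (by linarith) (by linarith)
end
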